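/- arXiv:1710.08060 — 3 statements merged into one kernel-verified Lean document; each statement's English description precedes it below -/
import Mathlib

section
/- Any line segment contained in a simple polygon has length at most half the perimeter of that polygon. -/
open scoped Real
noncomputable section

/-- Points in the Euclidean plane. -/
abbrev Pt : Type := EuclideanSpace ℝ (Fin 2)

/-- Two closed segments `ab` and `cd` properly intersect: their relative
interiors (open segments) share a point. -/
def ProperInter (a b c d : Pt) : Prop :=
  (openSegment ℝ a b ∩ openSegment ℝ c d).Nonempty

/-- `uv` (in either orientation) is one of the constraints in `S`. -/
def IsConstraintOf (S : Set (Pt × Pt)) (u v : Pt) : Prop := (u, v) ∈ S ∨ (v, u) ∈ S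

/-- `u` and `v` are visible with respect to the constraint set `S`:
either `uv` is itself a constraint, or the segment `uv` does not properly
intersect any constraint. -/
def Visible (S : Set (Pt × Pt)) (u v : Pt) : Prop :=
  IsConstraintOf S u v ∨ ∀ c ∈ S, ¬ ProperInter u v c.1 c.2

/-- The constraints have endpoints in `P` and no two of them properly intersect. -/
def ValidConstraints (P : Finset Pt) (S : Set (Pt × Pt)) : Prop :=
  (∀ c ∈ S, c.1 ∈ P ∧ c.2 ∈ P ∧ c.1 ≠ c.2) ∧
  (∀ c ∈ S, ∀ c' ∈ S, c ≠ c' → c ≠ (c'.2, c'.1) → ¬ ProperInter c.1 c.2 c'.1 c'.2)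

/-- A list of points is a path in the (symmetric) edge set `E`. -/
def IsPathIn (E : Set (Pt × Pt)) (p : List Pt) : Prop :=
  List.Chain' (fun a b => (a, b) ∈ E ∨ (b, a) ∈ E) p

/-- Euclidean length of a polygonal path given by a list of points. -/
def pathLen : List Pt → ℝ
  | a :: b :: r => dist a b + pathLen (b :: r)
  | _ => 0

/-- Shortest-path distance between `s` and `t` in the edge set `E`
(with Euclidean edge weights). -/
def sdist (E : Set (Pt × Pt)) (s t : Pt) : ℝ :=
  sInf { L | ∃ p : List Pt, IsPathIn E p ∧ p.head? = some s ∧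
              p.getLast? = some t ∧ pathLen p = L }
/-- The `i`-th boundary edge of the polygon with vertices `V 0, …, V (n-1)`. -/
def polyEdge (n : ℕ) [NeZero n] (V : Fin n → Pt) (i : Fin n) : Set Pt :=
  segment ℝ (V i) (V (i + 1))

/-- The boundary (closed curve) of the polygon. -/
def polyBnd (n : ℕ) [NeZero n] (V : Fin n → Pt) : Set Pt := ⋃ i, polyEdge n V i

/-- The perimeter of the polygon: the sum of the lengths of its boundary edges. -/
def perimeter (n : ℕ) [NeZero n] (V : Fin n → Pt) : ℝ := ∑ i, dist (V i) (V (i + 1))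

/-- `V` describes a simple polygon: at least three vertices, all distinct, and
two distinct boundary edges meet only in shared endpoints. -/
def IsSimplePolygon (n : ℕ) [NeZero n] (V : Fin n → Pt) : Prop :=
  3 ≤ n ∧ Function.Injective V ∧
  ∀ i j : Fin n, i ≠ j →
    polyEdge n V i ∩ polyEdge n V j ⊆
      ({V i, V (i + 1)} : Set Pt) ∩ ({V j, V (j + 1)} : Set Pt)

/-- The closed region bounded by a simple polygon: the boundary together with
the bounded connected components of its complement. -/
def polyRegion (n : ℕ) [NeZero n] (V : Fin n → Pt) : Set Pt :=
  polyBnd n V ∪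
  {x | x ∉ polyBnd n V ∧ Bornology.IsBounded (connectedComponentIn (polyBnd n V)ᶜ x)}

/-!
The region bounded by the polygon lies in the convex hull of its vertices: a point outside the
hull is strictly separated from it by an open half-space, which is connected, unbounded and
disjoint from the boundary, so the point lies in an unbounded component of the complement of the
boundary. The convex hull has the same diameter as the vertex set, and any two vertices cut the
boundary into two arcs, each at least as long as the distance between them.
-/

open Set Bornology Metric

section HalfSpace

variable {E : Type*} [NormedAddCommGroup E] [NormedSpace ℝ E]

theorem ContinuousLinearMap.not_isBounded_preimage_Ioi {f : E →L[ℝ] ℝ} (hf : f ≠ 0)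
    (u : ℝ) : ¬IsBounded (f ⁻¹' Ioi u) := by
  intro hbdd
  have hsurj : Function.Surjective f :=
    (f : E →ₗ[ℝ] ℝ).surjective_or_eq_zero.resolve_right
      fun h ↦ hf (ContinuousLinearMap.coe_injective h)
  have himage := f.lipschitz.isBounded_image hbdd
  rw [image_preimage_eq _ hsurj] at himage
  exact not_bddAbove_Ioi u himage.bddAbove

theorem mem_closedConvexHull_of_isBounded_connectedComponentIn {B : Set E} (hB : B.Nonempty)
    {x : E} (hx : IsBounded (connectedComponentIn Bᶜ x)) : x ∈ closedConvexHull ℝ B := by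
  by_contra hxB
  obtain ⟨f, u, hfB, hux⟩ :=
    geometric_hahn_banach_closed_point convex_closedConvexHull isClosed_closedConvexHull hxB
  have hf : f ≠ 0 := by
    rintro rfl
    obtain ⟨b, hb⟩ := hB
    have := hfB b (subset_closedConvexHull hb)
    simp only [zero_apply] at this hux
    linarith
  have hhalf : f ⁻¹' Ioi u ⊆ connectedComponentIn Bᶜ x :=
    ((convex_Ioi u).linear_preimage f.toLinearMap).isPreconnected.subset_connectedComponentIn hux
      fun y hy hyB ↦ (hfB y (subset_closedConvexHull hyB)).not_gt hy
  exact f.not_isBounded_preimage_Ioi hf u (hx.subset hhalf)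

end HalfSpace

section Polygon

open Fin.NatCast

variable {n : ℕ} [NeZero n] (V : Fin n → Pt)

theorem polyBnd_subset_convexHull : polyBnd n V ⊆ convexHull ℝ (range V) :=
  iUnion_subset fun i ↦ (convex_convexHull ℝ _).segment_subset
    (subset_convexHull ℝ _ (mem_range_self i)) (subset_convexHull ℝ _ (mem_range_self (i + 1)))

theorem polyRegion_subset_convexHull : polyRegion n V ⊆ convexHull ℝ (range V) := by
  rintro x (hx | ⟨-, hbdd⟩)
  · exact polyBnd_subset_convexHull V hx
  have hne : (polyBnd n V).Nonempty :=
    ⟨V 0, mem_iUnion.2 ⟨0, left_mem_segment ℝ _ _⟩⟩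
  exact closedConvexHull_min (polyBnd_subset_convexHull V) (convex_convexHull ℝ _)
    ((finite_range V).isCompact_convexHull (𝕜 := ℝ)).isClosed
    (mem_closedConvexHull_of_isBounded_connectedComponentIn hne hbdd)

theorem perimeter_eq_sum_range_add (i : Fin n) :
    perimeter n V = ∑ m ∈ Finset.range n, dist (V (i + m)) (V (i + (m + 1 : ℕ))) := by
  rw [perimeter, ← Fin.sum_univ_eq_sum_range fun m ↦ dist (V (i + m)) (V (i + (m + 1 : ℕ))),
    ← Equiv.sum_comp (Equiv.addLeft i)]
  refine Finset.sum_congr rfl fun m _ ↦ ?_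
  simp [Nat.cast_add, add_assoc]

theorem two_mul_dist_le_perimeter (i j : Fin n) : 2 * dist (V i) (V j) ≤ perimeter n V := by
  set f : ℕ → Pt := fun m ↦ V (i + m)
  set k := (j - i).val
  have hk : f k = V j := by simp [f, k]
  have hn : f n = V i := by simp [f]
  calc 2 * dist (V i) (V j) = dist (f 0) (f k) + dist (f k) (f n) := by
        simp [f, hk, hn, dist_comm (V j), two_mul]
    _ ≤ (∑ m ∈ Finset.Ico 0 k, dist (f m) (f (m + 1))) +
          ∑ m ∈ Finset.Ico k n, dist (f m) (f (m + 1)) :=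
        add_le_add (dist_le_Ico_sum_dist f k.zero_le) (dist_le_Ico_sum_dist f (j - i).isLt.le)
    _ = perimeter n V := by
        rw [Finset.sum_Ico_consecutive _ k.zero_le (j - i).isLt.le, ← Finset.range_eq_Ico,
          perimeter_eq_sum_range_add V i]

end Polygon

theorem segment_le_half_perimeter_general (n : ℕ) [NeZero n] (V : Fin n → Pt)
    (a b : Pt)
    (hab : segment ℝ a b ⊆ polyRegion n V) :
    dist a b ≤ perimeter n V / 2 := by
  have hmem : ∀ x ∈ segment ℝ a b, x ∈ convexHull ℝ (range V) :=
    fun x hx ↦ polyRegion_subset_convexHull V (hab hx)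
  have hperim : 0 ≤ perimeter n V := Finset.sum_nonneg fun _ _ ↦ dist_nonneg
  calc dist a b ≤ diam (convexHull ℝ (range V)) :=
        dist_le_diam_of_mem (isBounded_convexHull.2 (finite_range V).isBounded)
          (hmem a (left_mem_segment ℝ a b)) (hmem b (right_mem_segment ℝ a b))
    _ = diam (range V) := convexHull_diam _
    _ ≤ perimeter n V / 2 := diam_le_of_forall_dist_le (by positivity) <| by
        rintro _ ⟨i, rfl⟩ _ ⟨j, rfl⟩
        linarith [two_mul_dist_le_perimeter V i j]

/-- Any line segment contained in (the closed region bounded by) a simple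
polygon has length at most half the perimeter of the polygon. -/
theorem segment_le_half_perimeter (n : ℕ) [NeZero n] (V : Fin n → Pt)
    (hV : IsSimplePolygon n V) (a b : Pt)
    (hab : segment ℝ a b ⊆ polyRegion n V) :
    dist a b ≤ perimeter n V / 2 :=
  segment_le_half_perimeter_general n V a b hab
end
end

section
/- In the constrained half-Θ_6-graph, if u and v are mutually visible vertices with v in a positive subcone C_{i,j} of u, and there exists a vertex x in the same subcone C_{i,j}^u visible to u with projection on the bisector of C_i^u closer to u than that of v, then there exists a vertex y visible to both u and v, lying in C_i^u, whose projection on the bisector is strictly closer to u than v's projection. -/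
open scoped Real
noncomputable section

/-- Make a point from coordinates. -/
def pt (x y : ℝ) : Pt := (WithLp.equiv 2 (Fin 2 → ℝ)).symm ![x, y]

/-- Planar dot product. -/
def dotp (a b : Pt) : ℝ := a 0 * b 0 + a 1 * b 1

/-- Planar cross product. -/
def crossp (a b : Pt) : ℝ := a 0 * b 1 - a 1 * b 0

/-- Unit bisector vectors of the three positive cones `C₀, C₁, C₂` of the
(half-)`Θ₆` construction: `C₀` is bisected by the upward vertical ray and the
cones proceed clockwise at 120° intervals. -/
def bis : Fin 3 → Pt
  | 0 => pt 0 1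
  | 1 => pt (Real.sqrt 3 / 2) (-(1 / 2))
  | 2 => pt (-(Real.sqrt 3 / 2)) (-(1 / 2))

/-- Signed projection distance of `p` onto the bisector of the cone `Cᵢ` of `u`. -/
def projB (i : Fin 3) (u p : Pt) : ℝ := dotp (bis i) (p - u)

/-- `p` lies in the positive cone `Cᵢᵘ`: a closed cone of half-angle 30°
around the bisector `bis i` with apex `u`. -/
def inPosCone (i : Fin 3) (u p : Pt) : Prop :=
  p ≠ u ∧ Real.sqrt 3 / 2 * dist u p ≤ projB i u p

/-- The direction of `w` from `u` lies strictly (angularly) between the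
directions of `v` and `x` from `u`. -/
def StrictlyBetween (u v w x : Pt) : Prop :=
  (0 < crossp (v - u) (w - u) ∧ 0 < crossp (w - u) (x - u)) ∨
  (crossp (v - u) (w - u) < 0 ∧ crossp (w - u) (x - u) < 0)

/-- `v` and `x` lie in the same subcone of the cone `Cᵢᵘ`: both lie in the cone
and no constraint incident to `u` separates them angularly. -/
def SameSubcone (S : Set (Pt × Pt)) (u : Pt) (i : Fin 3) (v x : Pt) : Prop :=
  inPosCone i u v ∧ inPosCone i u x ∧
  ∀ w : Pt, IsConstraintOf S u w → ¬ StrictlyBetween u v w x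

/-- General position: no three points collinear, distinct points project
distinctly onto each cone bisector, and no point lies on a boundary ray of a
cone of another point. -/
def GenPos (P : Finset Pt) : Prop :=
  (∀ a ∈ P, ∀ b ∈ P, ∀ c ∈ P, a ≠ b → b ≠ c → a ≠ c → crossp (b - a) (c - a) ≠ 0) ∧
  (∀ u ∈ P, ∀ a ∈ P, ∀ b ∈ P, a ≠ b → ∀ i : Fin 3, projB i u a ≠ projB i u b) ∧
  (∀ a ∈ P, ∀ b ∈ P, a ≠ b → ∀ i : Fin 3, Real.sqrt 3 / 2 * dist a b ≠ projB i a b)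

/-- `uv` is an edge of the constrained half-`Θ₆`-graph on `P` with constraints
`S`: `v` lies in a positive (sub)cone of `u`, is visible to `u`, and among the
visible vertices of that subcone its projection onto the cone bisector is
closest to `u`. -/
def HalfTheta6Edge (P : Finset Pt) (S : Set (Pt × Pt)) (u v : Pt) : Prop :=
  v ∈ P ∧ ∃ i : Fin 3, inPosCone i u v ∧ Visible S u v ∧
    ∀ w ∈ P, w ≠ u → SameSubcone S u i v w → Visible S u w →
      projB i u v ≤ projB i u w

/-!
Call a vertex `w` a candidate if it is `x` or lies inside the triangle `u v x`, is visible from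
`u` or from `v`, and no constraint at `v` crosses `u w`; take a candidate `y` whose open triangle
`u v y` contains the fewest vertices. Suppose an apex `A ∈ {u, v}` does not see `y` and let `B`
be the other apex. A constraint blocking the view from `A` cannot cross the sides at `B`, which
`B` sees, nor end at `B` (by the subcone condition when `B = u`), so its endpoint on the side of
`B` lies inside `u v y`. Applied to the vertex inside `u v y` angularly closest to `A B` as seen
from `A`, this shows that this vertex is visible from `A`. A similar extremal choice among the
vertices visible from `v` removes the constraints at `v` that cross the view from `u`, and in
every case a candidate inside `u v y` appears, contradicting minimality. Finally the points of
the triangle `u v x` other than `u` and `v` lie in the cone `Cᵢᵘ` and project closer to `u`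
than `v` does.
-/

open Set Filter Topology

lemma crossp_self (a : Pt) : crossp a a = 0 := by
  simp only [crossp]; ring

lemma crossp_zero_left (a : Pt) : crossp 0 a = 0 := by
  simp [crossp]

lemma crossp_zero_right (a : Pt) : crossp a 0 = 0 := by
  simp [crossp]

lemma crossp_swap (a b : Pt) : crossp b a = -crossp a b := by
  simp only [crossp]; ring

lemma crossp_add_left (a b c : Pt) : crossp (a + b) c = crossp a c + crossp b c := by
  simp only [crossp, PiLp.add_apply]; ring

lemma crossp_add_right (a b c : Pt) : crossp a (b + c) = crossp a b + crossp a c := by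
  simp only [crossp, PiLp.add_apply]; ring

lemma crossp_smul_left (t : ℝ) (a b : Pt) : crossp (t • a) b = t * crossp a b := by
  simp only [crossp, PiLp.smul_apply, smul_eq_mul]; ring

lemma crossp_smul_right (t : ℝ) (a b : Pt) : crossp a (t • b) = t * crossp a b := by
  simp only [crossp, PiLp.smul_apply, smul_eq_mul]; ring

section Segments

variable {E : Type*} [AddCommGroup E] [Module ℝ E]

lemma mem_openSegment_iff_add_smul {z a b : E} :
    z ∈ openSegment ℝ a b ↔ ∃ t : ℝ, 0 < t ∧ t < 1 ∧ z = a + t • (b - a) := by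
  simp only [openSegment_eq_image', mem_image, mem_Ioo]
  exact ⟨fun ⟨t, ⟨h0, h1⟩, h⟩ => ⟨t, h0, h1, h.symm⟩, fun ⟨t, h0, h1, h⟩ => ⟨t, ⟨h0, h1⟩, h.symm⟩⟩

lemma openSegment_subset_openSegment_of_mem {q a b : E} (h : q ∈ openSegment ℝ a b) :
    openSegment ℝ q b ⊆ openSegment ℝ a b := by
  obtain ⟨s, hs0, hs1, rfl⟩ := mem_openSegment_iff_add_smul.1 h
  intro z hz
  obtain ⟨t, ht0, ht1, rfl⟩ := mem_openSegment_iff_add_smul.1 hz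
  refine mem_openSegment_iff_add_smul.2 ⟨s + t * (1 - s), by nlinarith, by nlinarith, ?_⟩
  module

lemma openSegment_subset_openSegment_of_endpoint {q c d e : E} (hq : q ∈ openSegment ℝ c d)
    (he : e = c ∨ e = d) : openSegment ℝ q e ⊆ openSegment ℝ c d := by
  rcases he with rfl | rfl
  · rw [openSegment_symm ℝ e d] at hq ⊢
    exact openSegment_subset_openSegment_of_mem hq
  · exact openSegment_subset_openSegment_of_mem hq

lemma mul_neg_of_mem_openSegment {f : E → ℝ}
    (hf : ∀ p p' t, f (p + t • (p' - p)) = (1 - t) * f p + t * f p') {q c d : E}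
    (hq : q ∈ openSegment ℝ c d) (hfq : f q = 0) (hfc : f c ≠ 0) : f c * f d < 0 := by
  obtain ⟨t, ht0, ht1, rfl⟩ := mem_openSegment_iff_add_smul.1 hq
  rw [hf] at hfq
  have hcd : t * (f c * f d) = -((1 - t) * f c ^ 2) := by linear_combination f c * hfq
  have : 0 < (1 - t) * f c ^ 2 := mul_pos (by linarith) (sq_pos_of_ne_zero hfc)
  nlinarith

end Segments

lemma ne_of_crossp_ne_zero {A B C : Pt} (hD : crossp (B - A) (C - A) ≠ 0) :
    A ≠ B ∧ A ≠ C ∧ B ≠ C := by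
  refine ⟨?_, ?_, ?_⟩ <;> rintro rfl <;> apply hD
  · rw [sub_self, crossp_zero_left]
  · rw [sub_self, crossp_zero_right]
  · rw [crossp_self]

lemma crossp_ne_zero_of_sub_eq {A B C w : Pt} {b c : ℝ} (hD : crossp (B - A) (C - A) ≠ 0)
    (hc : c ≠ 0) (h : w - A = b • (B - A) + c • (C - A)) : crossp (B - A) (w - A) ≠ 0 := by
  rw [h, crossp_add_right, crossp_smul_right, crossp_smul_right, crossp_self, mul_zero, zero_add]
  exact mul_ne_zero hc hD

lemma crossp_eq_zero_of_mem_openSegment {z a b : Pt} (h : z ∈ openSegment ℝ a b) :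
    crossp (b - a) (z - a) = 0 := by
  obtain ⟨t, -, -, rfl⟩ := mem_openSegment_iff_add_smul.1 h
  rw [add_sub_cancel_left, crossp_smul_right, crossp_self, mul_zero]

lemma crossp_eq_zero_of_mem_openSegment_inter {z a b c : Pt} (hb : z ∈ openSegment ℝ a b)
    (hc : z ∈ openSegment ℝ a c) : crossp (b - a) (c - a) = 0 := by
  obtain ⟨t, ht, -, rfl⟩ := mem_openSegment_iff_add_smul.1 hc
  have h := crossp_eq_zero_of_mem_openSegment hb
  rw [add_sub_cancel_left, crossp_smul_right] at h
  exact (mul_eq_zero.1 h).resolve_left ht.ne'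

/-- Barycentric coordinates with respect to the triangle `A B C`, by Cramer's rule; they are
junk values when `A B C` are collinear. -/
def baryB (A B C w : Pt) : ℝ := crossp (w - A) (C - A) / crossp (B - A) (C - A)

def baryC (A B C w : Pt) : ℝ := crossp (B - A) (w - A) / crossp (B - A) (C - A)

def baryA (A B C w : Pt) : ℝ := 1 - baryB A B C w - baryC A B C w

/-- The signed area of `A w z` relative to that of `A B C`; its sign tells on which side of the
line `A w` the point `z` lies. -/
def areaRatio (A B C w z : Pt) : ℝ := crossp (w - A) (z - A) / crossp (B - A) (C - A)

def InOpenTriangle (A B C w : Pt) : Prop :=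
  ∃ a b c : ℝ, 0 < a ∧ 0 < b ∧ 0 < c ∧ a + b + c = 1 ∧ w = a • A + b • B + c • C

def TriangleBoundary (A B C : Pt) : Set Pt :=
  segment ℝ A B ∪ segment ℝ B C ∪ segment ℝ A C

section Barycentric

variable {A B C : Pt}

lemma eq_bary_combination (hD : crossp (B - A) (C - A) ≠ 0) (w : Pt) :
    w = baryA A B C w • A + baryB A B C w • B + baryC A B C w • C := by
  ext k
  simp only [baryA, baryB, baryC, PiLp.add_apply, PiLp.smul_apply, smul_eq_mul]
  field_simp
  fin_cases k <;>
  · simp only [crossp, PiLp.sub_apply, Fin.zero_eta, Fin.mk_one]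
    ring

lemma bary_of_sub_eq (hD : crossp (B - A) (C - A) ≠ 0) {w : Pt} {b c : ℝ}
    (h : w - A = b • (B - A) + c • (C - A)) : baryB A B C w = b ∧ baryC A B C w = c := by
  constructor
  · rw [baryB, h, crossp_add_left, crossp_smul_left, crossp_smul_left, crossp_self, mul_zero,
      add_zero]
    field_simp
  · rw [baryC, h, crossp_add_right, crossp_smul_right, crossp_smul_right, crossp_self, mul_zero,
      zero_add]
    field_simp

lemma bary_combination (hD : crossp (B - A) (C - A) ≠ 0) {a b c : ℝ} (h : a + b + c = 1) :
    baryA A B C (a • A + b • B + c • C) = a ∧ baryB A B C (a • A + b • B + c • C) = b ∧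
      baryC A B C (a • A + b • B + c • C) = c := by
  obtain ⟨hB, hC⟩ := bary_of_sub_eq hD (w := a • A + b • B + c • C) (b := b) (c := c)
    (by rw [show a = 1 - b - c by linarith]; module)
  exact ⟨by rw [baryA, hB, hC]; linarith, hB, hC⟩

lemma baryB_eq_zero_of_mem_segment (hD : crossp (B - A) (C - A) ≠ 0) {z : Pt}
    (hz : z ∈ segment ℝ A C) : baryB A B C z = 0 ∧ 0 ≤ baryC A B C z := by
  obtain ⟨s, t, -, ht, hst, rfl⟩ := hz
  obtain ⟨h₁, h₂⟩ := bary_of_sub_eq hD (w := s • A + t • C) (b := 0) (c := t)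
    (by rw [show s = 1 - t by linarith]; module)
  exact ⟨h₁, h₂.symm ▸ ht⟩

lemma baryA_affine (p p' : Pt) (t : ℝ) :
    baryA A B C (p + t • (p' - p)) = (1 - t) * baryA A B C p + t * baryA A B C p' := by
  simp only [baryA, baryB, baryC, crossp, PiLp.add_apply, PiLp.sub_apply, PiLp.smul_apply,
    smul_eq_mul]
  ring

lemma baryB_affine (p p' : Pt) (t : ℝ) :
    baryB A B C (p + t • (p' - p)) = (1 - t) * baryB A B C p + t * baryB A B C p' := by
  simp only [baryB, crossp, PiLp.add_apply, PiLp.sub_apply, PiLp.smul_apply, smul_eq_mul]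
  ring

lemma baryC_affine (p p' : Pt) (t : ℝ) :
    baryC A B C (p + t • (p' - p)) = (1 - t) * baryC A B C p + t * baryC A B C p' := by
  simp only [baryC, crossp, PiLp.add_apply, PiLp.sub_apply, PiLp.smul_apply, smul_eq_mul]
  ring

lemma areaRatio_affine (w p p' : Pt) (t : ℝ) :
    areaRatio A B C w (p + t • (p' - p)) =
      (1 - t) * areaRatio A B C w p + t * areaRatio A B C w p' := by
  simp only [areaRatio, crossp, PiLp.add_apply, PiLp.sub_apply, PiLp.smul_apply, smul_eq_mul]
  ring

lemma areaRatio_eq_bary (hD : crossp (B - A) (C - A) ≠ 0) (w z : Pt) :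
    areaRatio A B C w z = baryB A B C w * baryC A B C z - baryC A B C w * baryB A B C z := by
  simp only [areaRatio, baryB, baryC]
  field_simp
  simp only [crossp, PiLp.sub_apply]
  ring

lemma areaRatio_eq_zero_of_mem_openSegment {w z : Pt} (hz : z ∈ openSegment ℝ A w) :
    areaRatio A B C w z = 0 := by
  rw [areaRatio, crossp_eq_zero_of_mem_openSegment hz, zero_div]

lemma inOpenTriangle_iff_bary_pos (hD : crossp (B - A) (C - A) ≠ 0) {w : Pt} :
    InOpenTriangle A B C w ↔ 0 < baryA A B C w ∧ 0 < baryB A B C w ∧ 0 < baryC A B C w := by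
  constructor
  · rintro ⟨a, b, c, ha, hb, hc, h, rfl⟩
    obtain ⟨h1, h2, h3⟩ := bary_combination hD h
    exact ⟨by rwa [h1], by rwa [h2], by rwa [h3]⟩
  · rintro ⟨ha, hb, hc⟩
    exact ⟨_, _, _, ha, hb, hc, by simp only [baryA]; ring, eq_bary_combination hD w⟩

lemma baryC_div_baryB_lt (hD : crossp (B - A) (C - A) ≠ 0) {z ω : Pt}
    (hz : InOpenTriangle A B C z) (hω : InOpenTriangle A B C ω)
    (h : areaRatio A B C z B * areaRatio A B C z ω < 0) :
    baryC A B C z / baryB A B C z < baryC A B C ω / baryB A B C ω := by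
  obtain ⟨hB₁, hB₂⟩ := bary_of_sub_eq hD (w := B) (b := 1) (c := 0) (by module)
  rw [areaRatio_eq_bary hD z B, areaRatio_eq_bary hD z ω, hB₁, hB₂] at h
  obtain ⟨-, hzb, hzc⟩ := (inOpenTriangle_iff_bary_pos hD).1 hz
  obtain ⟨-, hωb, -⟩ := (inOpenTriangle_iff_bary_pos hD).1 hω
  rw [div_lt_div_iff₀ hzb hωb]
  nlinarith

lemma mem_triangleBoundary_of_bary (hD : crossp (B - A) (C - A) ≠ 0) {z : Pt}
    (ha : 0 ≤ baryA A B C z) (hb : 0 ≤ baryB A B C z) (hc : 0 ≤ baryC A B C z)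
    (h0 : baryA A B C z = 0 ∨ baryB A B C z = 0 ∨ baryC A B C z = 0) :
    z ∈ TriangleBoundary A B C := by
  have hsum : baryA A B C z + baryB A B C z + baryC A B C z = 1 := by simp only [baryA]; ring
  have hz := (eq_bary_combination hD z).symm
  generalize baryA A B C z = a, baryB A B C z = b, baryC A B C z = c at *
  rcases h0 with rfl | rfl | rfl
  · exact Or.inl (Or.inr ⟨b, c, hb, hc, by linarith, by rw [← hz, zero_smul, zero_add]⟩)
  · exact Or.inr ⟨a, c, ha, hc, by linarith, by rw [← hz, zero_smul, add_zero]⟩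
  · exact Or.inl (Or.inl ⟨a, b, ha, hb, by linarith, by rw [← hz, zero_smul, add_zero]⟩)

lemma InOpenTriangle.notMem_triangleBoundary (hD : crossp (B - A) (C - A) ≠ 0) {z : Pt}
    (hz : InOpenTriangle A B C z) : z ∉ TriangleBoundary A B C := by
  obtain ⟨ha, hb, hc⟩ := (inOpenTriangle_iff_bary_pos hD).1 hz
  rintro ((⟨s, t, -, -, hst, rfl⟩ | ⟨s, t, -, -, hst, rfl⟩) | ⟨s, t, -, -, hst, rfl⟩)
  · have := (bary_combination hD (a := s) (b := t) (c := 0) (by linarith)).2.2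
    simp only [zero_smul, add_zero] at this
    exact hc.ne' this
  · have := (bary_combination hD (a := 0) (b := s) (c := t) (by linarith)).1
    simp only [zero_smul, zero_add] at this
    exact ha.ne' this
  · have := (bary_combination hD (a := s) (b := 0) (c := t) (by linarith)).2.1
    simp only [zero_smul, add_zero] at this
    exact hb.ne' this

end Barycentric

namespace InOpenTriangle

variable {A B C w : Pt}

lemma swap (h : InOpenTriangle A B C w) : InOpenTriangle B A C w := by
  obtain ⟨a, b, c, ha, hb, hc, h, rfl⟩ := h
  exact ⟨b, a, c, hb, ha, hc, by linarith, by abel⟩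

lemma trans {G : Pt} (hG : InOpenTriangle A B C G) (hw : InOpenTriangle A B G w) :
    InOpenTriangle A B C w := by
  obtain ⟨a', b', c', ha', hb', hc', hs', rfl⟩ := hG
  obtain ⟨a, b, c, ha, hb, hc, hs, rfl⟩ := hw
  refine ⟨a + c * a', b + c * b', c * c', by positivity, by positivity, by positivity,
    by linear_combination hs + c * hs', ?_⟩
  module

lemma of_mem_openSegment_left (hw : InOpenTriangle A B C w) {z : Pt}
    (hz : z ∈ openSegment ℝ A w) : InOpenTriangle A B C z := by
  obtain ⟨a, b, c, ha, hb, hc, hs, rfl⟩ := hw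
  obtain ⟨t, ht0, ht1, rfl⟩ := mem_openSegment_iff_add_smul.1 hz
  refine ⟨1 - t + t * a, t * b, t * c, by nlinarith, by positivity, by positivity,
    by linear_combination t * hs, ?_⟩
  module

lemma exists_sub_eq (h : InOpenTriangle A B C w) :
    ∃ b c : ℝ, 0 < b ∧ 0 < c ∧ b + c < 1 ∧ w - A = b • (B - A) + c • (C - A) := by
  obtain ⟨a, b, c, ha, hb, hc, hs, rfl⟩ := h
  refine ⟨b, c, hb, hc, by linarith, ?_⟩
  rw [show a = 1 - b - c by linarith]
  module

lemma crossp_ne_zero (hD : crossp (B - A) (C - A) ≠ 0)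
    (hw : InOpenTriangle A B C w) : crossp (B - A) (w - A) ≠ 0 := by
  obtain ⟨b, c, -, hc, -, h⟩ := hw.exists_sub_eq
  exact crossp_ne_zero_of_sub_eq hD hc.ne' h

end InOpenTriangle

lemma exists_sub_eq_of_eq_or_inOpenTriangle {A B C w : Pt} (h : w = C ∨ InOpenTriangle A B C w) :
    ∃ b c : ℝ, 0 ≤ b ∧ 0 < c ∧ b + c ≤ 1 ∧ w - A = b • (B - A) + c • (C - A) := by
  rcases h with rfl | h
  · exact ⟨0, 1, le_rfl, one_pos, by norm_num, by module⟩
  · obtain ⟨b, c, hb, hc, hbc, h⟩ := h.exists_sub_eq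
    exact ⟨b, c, hb.le, hc, hbc.le, h⟩

open scoped Classical in
lemma card_filter_inOpenTriangle_lt {P : Finset Pt} {A B C w : Pt} (hwP : w ∈ P)
    (hD : crossp (B - A) (C - A) ≠ 0) (hw : InOpenTriangle A B C w) :
    (P.filter (InOpenTriangle A B w)).card < (P.filter (InOpenTriangle A B C)).card := by
  refine Finset.card_lt_card ⟨fun z hz => ?_, fun hsub => ?_⟩
  · rw [Finset.mem_filter] at hz ⊢
    exact ⟨hz.1, hw.trans hz.2⟩
  · have hself := (Finset.mem_filter.1 (hsub (Finset.mem_filter.2 ⟨hwP, hw⟩))).2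
    exact hself.notMem_triangleBoundary (hw.crossp_ne_zero hD)
      (Or.inl (Or.inr (right_mem_segment ℝ B w)))

lemma eventually_pos_affine {a b : ℝ} (ha : 0 ≤ a) (h : 0 < a ∨ 0 < b) :
    ∀ᶠ t in 𝓝[>] (0 : ℝ), 0 < (1 - t) * a + t * b := by
  rcases h with ha' | hb
  · have hc : ContinuousAt (fun t : ℝ => (1 - t) * a + t * b) 0 := by fun_prop
    exact nhdsWithin_le_nhds (hc.eventually (lt_mem_nhds (by simpa using ha')))
  · filter_upwards [Ioo_mem_nhdsGT one_pos] with t ht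
    nlinarith [ht.1, ht.2]

lemma nonneg_and_eq_zero_of_min_eq_zero {a b c : ℝ} (h : min (min a b) c = 0) :
    (0 ≤ a ∧ 0 ≤ b ∧ 0 ≤ c) ∧ (a = 0 ∨ b = 0 ∨ c = 0) := by
  grind

section Confinement

variable {A B C : Pt}

lemma inOpenTriangle_of_avoids_boundary (hD : crossp (B - A) (C - A) ≠ 0) {q e : Pt}
    (hq : InOpenTriangle A B C q)
    (havoid : ∀ z ∈ insert e (openSegment ℝ q e), z ∉ TriangleBoundary A B C) :
    InOpenTriangle A B C e := by
  rw [inOpenTriangle_iff_bary_pos hD] at hq ⊢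
  by_contra hout
  let f : ℝ → ℝ := fun t => min (min ((1 - t) * baryA A B C q + t * baryA A B C e)
    ((1 - t) * baryB A B C q + t * baryB A B C e)) ((1 - t) * baryC A B C q + t * baryC A B C e)
  have hf : Continuous f := by fun_prop
  have hf0 : 0 < f 0 := by simp [f, hq.1, hq.2.1, hq.2.2]
  have hf1 : f 1 ≤ 0 := by
    simp only [f, sub_self, zero_mul, one_mul, zero_add]
    by_contra h
    exact hout ⟨by grind, by grind, by grind⟩
  obtain ⟨t, ⟨ht0, ht1⟩, hft⟩ :=
    intermediate_value_Icc' zero_le_one hf.continuousOn ⟨hf1, hf0.le⟩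
  obtain ⟨⟨ha, hb, hc⟩, h0⟩ := nonneg_and_eq_zero_of_min_eq_zero hft
  have ht0' : 0 < t := lt_of_le_of_ne ht0 (by rintro rfl; exact hf0.ne' hft)
  refine havoid (q + t • (e - q)) ?_ ?_
  · rcases ht1.lt_or_eq with ht1 | rfl
    · exact Or.inr (mem_openSegment_iff_add_smul.2 ⟨t, ht0', ht1, rfl⟩)
    · left; module
  · rw [← baryA_affine] at ha h0
    rw [← baryB_affine] at hb h0
    rw [← baryC_affine] at hc h0
    exact mem_triangleBoundary_of_bary hD ha hb hc h0

lemma inOpenTriangle_of_avoids_boundary' (hD : crossp (B - A) (C - A) ≠ 0) {q e : Pt}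
    (hq : 0 ≤ baryA A B C q ∧ 0 ≤ baryB A B C q ∧ 0 ≤ baryC A B C q)
    (hpos : (0 < baryA A B C q ∨ 0 < baryA A B C e) ∧ (0 < baryB A B C q ∨ 0 < baryB A B C e) ∧
      (0 < baryC A B C q ∨ 0 < baryC A B C e))
    (havoid : ∀ z ∈ insert e (openSegment ℝ q e), z ∉ TriangleBoundary A B C) :
    InOpenTriangle A B C e := by
  obtain ⟨t, ha, hb, hc, ht0, ht1⟩ := ((eventually_pos_affine hq.1 hpos.1).and
    ((eventually_pos_affine hq.2.1 hpos.2.1).and ((eventually_pos_affine hq.2.2 hpos.2.2).and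
      (Ioo_mem_nhdsGT one_pos)))).exists
  have hq' : q + t • (e - q) ∈ openSegment ℝ q e :=
    mem_openSegment_iff_add_smul.2 ⟨t, ht0, ht1, rfl⟩
  refine inOpenTriangle_of_avoids_boundary hD ((inOpenTriangle_iff_bary_pos hD).2
    ⟨by rwa [baryA_affine], by rwa [baryB_affine], by rwa [baryC_affine]⟩) fun z hz => havoid z ?_
  rcases hz with rfl | hz
  · exact mem_insert _ _
  · exact Or.inr (openSegment_subset_openSegment_of_mem hq' hz)

end Confinement

def NoIncidentCrossing (S : Set (Pt × Pt)) (v a b : Pt) : Prop :=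
  ∀ ω, IsConstraintOf S v ω → ¬ ProperInter a b v ω

section Constraints

variable {P : Finset Pt} {S : Set (Pt × Pt)} {a b c d v w : Pt}

lemma ProperInter.swap_left (h : ProperInter a b c d) : ProperInter b a c d := by
  rwa [ProperInter, openSegment_symm]

lemma ProperInter.swap_right (h : ProperInter a b c d) : ProperInter a b d c := by
  rwa [ProperInter, openSegment_symm ℝ d c]

lemma IsConstraintOf.symm (h : IsConstraintOf S a b) : IsConstraintOf S b a := Or.symm h

lemma Visible.symm (h : Visible S a b) : Visible S b a :=
  h.imp IsConstraintOf.symm fun h c hc hi => h c hc hi.swap_left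

lemma IsConstraintOf.mem (hS : ValidConstraints P S) (h : IsConstraintOf S a b) :
    a ∈ P ∧ b ∈ P ∧ a ≠ b := by
  rcases h with h | h
  · exact hS.1 _ h
  · obtain ⟨hb, ha, hne⟩ := hS.1 _ h
    exact ⟨ha, hb, hne.symm⟩

lemma GenPos.collinear (hgp : GenPos P) (ha : a ∈ P) (hb : b ∈ P) (hc : c ∈ P)
    (h : crossp (b - a) (c - a) = 0) : a = b ∨ b = c ∨ a = c := by
  by_contra hne
  push Not at hne
  exact hgp.1 a ha b hb c hc hne.1 hne.2.1 hne.2.2 h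

lemma eq_of_properInter_common_endpoint (hgp : GenPos P) (ha : a ∈ P) (hb : b ∈ P) (hd : d ∈ P)
    (hab : a ≠ b) (had : a ≠ d) (h : ProperInter a b a d) : b = d := by
  obtain ⟨q, hqb, hqd⟩ := h
  rcases hgp.collinear ha hb hd (crossp_eq_zero_of_mem_openSegment_inter hqb hqd) with h | h | h
  exacts [absurd h hab, h, absurd h had]

lemma notMem_openSegment_of_isConstraintOf (hS : ValidConstraints P S) (hgp : GenPos P)
    (h : IsConstraintOf S a b) (hw : w ∈ P) : w ∉ openSegment ℝ a b := by
  obtain ⟨ha, hb, hab⟩ := h.mem hS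
  intro hmem
  rcases hgp.collinear ha hb hw (crossp_eq_zero_of_mem_openSegment hmem) with h | rfl | rfl
  · exact hab h
  · exact hab (right_mem_openSegment_iff.1 hmem)
  · exact hab (left_mem_openSegment_iff.1 hmem)

lemma notMem_segment_of_mem_openSegment (hS : ValidConstraints P S) (hgp : GenPos P)
    (h : IsConstraintOf S a b) {z : Pt} (hz : z ∈ openSegment ℝ a b) (hc : c ∈ P) (hd : d ∈ P)
    (hcd : ¬ ProperInter c d a b) : z ∉ segment ℝ c d := by
  rw [← insert_endpoints_openSegment]
  rintro (rfl | rfl | hz')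
  · exact notMem_openSegment_of_isConstraintOf hS hgp h hc hz
  · exact notMem_openSegment_of_isConstraintOf hS hgp h hd hz
  · exact hcd ⟨z, hz', hz⟩

lemma notMem_segment_of_genPos (hgp : GenPos P) (ha : a ∈ P) (hb : b ∈ P) (hw : w ∈ P)
    (hab : a ≠ b) (hwa : w ≠ a) (hwb : w ≠ b) : w ∉ segment ℝ a b := by
  rw [← insert_endpoints_openSegment]
  rintro (rfl | rfl | hw')
  · exact hwa rfl
  · exact hwb rfl
  · rcases hgp.collinear ha hb hw (crossp_eq_zero_of_mem_openSegment hw') with h | h | h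
    exacts [hab h, hwb h.symm, hwa h.symm]

lemma exists_properInter_of_not_visible (h : ¬ Visible S a b) :
    ¬ IsConstraintOf S a b ∧ ∃ c d, IsConstraintOf S c d ∧ ProperInter a b c d := by
  simp only [Visible, not_or, not_forall, not_not] at h
  obtain ⟨hnc, ⟨c, d⟩, hcd, hpi⟩ := h
  exact ⟨hnc, c, d, Or.inl hcd, hpi⟩

lemma Visible.not_properInter (hS : ValidConstraints P S) (hv : Visible S a b)
    (hcd : IsConstraintOf S c d) (h₁ : (c, d) ≠ (a, b)) (h₂ : (c, d) ≠ (b, a)) :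
    ¬ ProperInter a b c d := by
  have h₃ : (d, c) ≠ (a, b) := fun h => h₂ (by simp_all [Prod.ext_iff])
  have h₄ : (d, c) ≠ (b, a) := fun h => h₁ (by simp_all [Prod.ext_iff])
  intro h
  rcases hv with hab | hv
  · rcases hab with hab | hab <;> rcases hcd with hcd | hcd
    · exact hS.2 _ hab _ hcd h₁.symm h₃.symm h
    · exact hS.2 _ hab _ hcd h₃.symm h₁.symm h.swap_right
    · exact hS.2 _ hab _ hcd h₂.symm h₄.symm h.swap_left
    · exact hS.2 _ hab _ hcd h₄.symm h₂.symm h.swap_left.swap_right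
  · rcases hcd with hcd | hcd
    · exact hv _ hcd h
    · exact hv _ hcd h.swap_right

lemma Visible.noIncidentCrossing (hS : ValidConstraints P S) (h : Visible S a b) (hva : v ≠ a)
    (hvb : v ≠ b) : NoIncidentCrossing S v a b :=
  fun _ hω => h.not_properInter hS hω (by simp [hva]) (by simp [hvb])

lemma endpoints_ne_of_properInter (hS : ValidConstraints P S) (hgp : GenPos P) (ha : a ∈ P)
    (hb : b ∈ P) (hab : a ≠ b) (hnc : ¬ IsConstraintOf S a b) (hcd : IsConstraintOf S c d)
    (h : ProperInter a b c d) : c ≠ a ∧ c ≠ b ∧ d ≠ a ∧ d ≠ b := by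
  obtain ⟨hc, hd, hcd'⟩ := hcd.mem hS
  refine ⟨?_, ?_, ?_, ?_⟩ <;> rintro rfl
  · obtain rfl := eq_of_properInter_common_endpoint hgp hc hb hd hab hcd' h
    exact hnc hcd
  · obtain rfl := eq_of_properInter_common_endpoint hgp hc ha hd hab.symm hcd' h.swap_left
    exact hnc hcd.symm
  · obtain rfl := eq_of_properInter_common_endpoint hgp hd hb hc hab hcd'.symm h.swap_right
    exact hnc hcd.symm
  · obtain rfl :=
      eq_of_properInter_common_endpoint hgp hd ha hc hab.symm hcd'.symm h.swap_left.swap_right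
    exact hnc hcd

end Constraints

section Landing

variable {P : Finset Pt} {S : Set (Pt × Pt)}

lemma notMem_triangleBoundary_of_constraint (hS : ValidConstraints P S) (hgp : GenPos P)
    {A B C c d q e : Pt} (hA : A ∈ P) (hB : B ∈ P) (hC : C ∈ P) (hAB : A ≠ B) (hBC : B ≠ C)
    (hcd : IsConstraintOf S c d) (hq : q ∈ openSegment ℝ c d) (he : e = c ∨ e = d)
    (heA : e ≠ A) (heB : e ≠ B) (hcdAB : ¬ ProperInter A B c d) (hcdBC : ¬ ProperInter B C c d)
    (hAC : ∀ z ∈ insert e (openSegment ℝ q e), z ∉ segment ℝ A C) :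
    ∀ z ∈ insert e (openSegment ℝ q e), z ∉ TriangleBoundary A B C := by
  obtain ⟨hc, hd, -⟩ := hcd.mem hS
  have heP : e ∈ P := by rcases he with rfl | rfl <;> assumption
  have heC : e ≠ C := by
    rintro rfl
    exact hAC e (mem_insert _ _) (right_mem_segment ℝ A e)
  intro z hz
  have hz' : z = e ∨ z ∈ openSegment ℝ c d :=
    hz.imp_right fun h => openSegment_subset_openSegment_of_endpoint hq he h
  rintro ((hzAB | hzBC) | hzAC)
  · rcases hz' with rfl | hz'
    · exact notMem_segment_of_genPos hgp hA hB heP hAB heA heB hzAB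
    · exact notMem_segment_of_mem_openSegment hS hgp hcd hz' hA hB hcdAB hzAB
  · rcases hz' with rfl | hz'
    · exact notMem_segment_of_genPos hgp hB hC heP hBC heB heC hzBC
    · exact notMem_segment_of_mem_openSegment hS hgp hcd hz' hB hC hcdBC hzBC
  · exact hAC z hz hzAC

lemma inOpenTriangle_of_areaRatio_neg (hS : ValidConstraints P S) (hgp : GenPos P)
    {A B C W c d e : Pt} (hA : A ∈ P) (hB : B ∈ P) (hC : C ∈ P)
    (hD : crossp (B - A) (C - A) ≠ 0) (hBA : Visible S B A) (hBC : Visible S B C)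
    (hW : W = C ∨ InOpenTriangle A B C W) (hcd : IsConstraintOf S c d) (hcB : c ≠ B)
    (hdB : d ≠ B) (hpi : ProperInter A W c d) (he : e = c ∨ e = d) (heA : e ≠ A)
    (hside : areaRatio A B C W e < 0) : InOpenTriangle A B C e := by
  obtain ⟨hAB, -, hBC'⟩ := ne_of_crossp_ne_zero hD
  obtain ⟨bW, cW, hbW, hcW, hbcW, hWA⟩ := exists_sub_eq_of_eq_or_inOpenTriangle hW
  obtain ⟨hWb, hWc⟩ := bary_of_sub_eq hD hWA
  obtain ⟨q, hqAW, hqcd⟩ := hpi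
  have hq := areaRatio_eq_zero_of_mem_openSegment (B := B) (C := C) hqAW
  obtain ⟨t, ht0, ht1, rfl⟩ := mem_openSegment_iff_add_smul.1 hqAW
  obtain ⟨hbq, hcq⟩ := bary_of_sub_eq hD (w := A + t • (W - A)) (b := t * bW) (c := t * cW)
    (by rw [add_sub_cancel_left, hWA]; module)
  have haq : baryA A B C (A + t • (W - A)) = 1 - t * bW - t * cW := by rw [baryA, hbq, hcq]
  have hneg : ∀ z ∈ insert e (openSegment ℝ (A + t • (W - A)) e), areaRatio A B C W z < 0 := by
    rintro z (rfl | hz)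
    · exact hside
    · obtain ⟨s, hs0, -, rfl⟩ := mem_openSegment_iff_add_smul.1 hz
      rw [areaRatio_affine, hq]
      nlinarith
  have hnonneg : ∀ z ∈ segment ℝ A C, 0 ≤ areaRatio A B C W z := by
    intro z hz
    obtain ⟨h₁, h₂⟩ := baryB_eq_zero_of_mem_segment hD hz
    rw [areaRatio_eq_bary hD, hWb, hWc, h₁]
    nlinarith
  refine inOpenTriangle_of_avoids_boundary' hD (q := A + t • (W - A)) ?_ ?_ ?_
  · exact ⟨by rw [haq]; nlinarith, by rw [hbq]; positivity, by rw [hcq]; positivity⟩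
  · refine ⟨Or.inl (by rw [haq]; nlinarith), ?_, Or.inl (by rw [hcq]; positivity)⟩
    rcases hbW.lt_or_eq with hb | rfl
    · exact Or.inl (by rw [hbq]; positivity)
    · rw [areaRatio_eq_bary hD, hWb, hWc, zero_mul, zero_sub, neg_lt_zero] at hside
      exact Or.inr (pos_of_mul_pos_right hside hcW.le)
  · exact notMem_triangleBoundary_of_constraint hS hgp hA hB hC hAB hBC' hcd hqcd he heA
      (by rcases he with rfl | rfl <;> assumption)
      (fun h => hBA.not_properInter hS hcd (by simp [hcB]) (by simp [hdB]) h.swap_left)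
      (hBC.not_properInter hS hcd (by simp [hcB]) (by simp [hdB]))
      (fun z hz hzAC => (hneg z hz).not_ge (hnonneg z hzAC))

lemma exists_mem_openTriangle_of_not_visible (hS : ValidConstraints P S) (hgp : GenPos P)
    {A B C W : Pt} (hA : A ∈ P) (hB : B ∈ P) (hC : C ∈ P) (hWP : W ∈ P)
    (hD : crossp (B - A) (C - A) ≠ 0) (hBA : Visible S B A) (hBC : Visible S B C)
    (hW : W = C ∨ InOpenTriangle A B C W) (hAW : ¬ Visible S A W)
    (hcross : NoIncidentCrossing S B A W) :
    ∃ e ∈ P, InOpenTriangle A B C e ∧ areaRatio A B C W e < 0 := by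
  have hWA : W ≠ A := by
    obtain ⟨b, c, -, hc, -, h⟩ := exists_sub_eq_of_eq_or_inOpenTriangle hW
    rintro rfl
    exact crossp_ne_zero_of_sub_eq hD hc.ne' h (by rw [sub_self, crossp_zero_right])
  obtain ⟨hnc, c, d, hcd, hpi⟩ := exists_properInter_of_not_visible hAW
  obtain ⟨hcA, hcW, hdA, -⟩ := endpoints_ne_of_properInter hS hgp hA hWP hWA.symm hnc hcd hpi
  have hcB : c ≠ B := by
    rintro rfl
    exact hcross d hcd hpi
  have hdB : d ≠ B := by
    rintro rfl
    exact hcross c hcd.symm hpi.swap_right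
  obtain ⟨hc, hd, -⟩ := hcd.mem hS
  obtain ⟨q, hqAW, hqcd⟩ := id hpi
  have hc_side : areaRatio A B C W c ≠ 0 :=
    div_ne_zero (hgp.1 A hA W hWP c hc hWA.symm hcW.symm hcA.symm) hD
  have hcd_side := mul_neg_of_mem_openSegment (areaRatio_affine W) hqcd
    (areaRatio_eq_zero_of_mem_openSegment hqAW) hc_side
  obtain ⟨e, he, heP, heA, hside⟩ :
      ∃ e, (e = c ∨ e = d) ∧ e ∈ P ∧ e ≠ A ∧ areaRatio A B C W e < 0 := by
    rcases hc_side.lt_or_gt with h | h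
    · exact ⟨c, Or.inl rfl, hc, hcA, h⟩
    · exact ⟨d, Or.inr rfl, hd, hdA, by nlinarith⟩
  exact ⟨e, heP, inOpenTriangle_of_areaRatio_neg hS hgp hA hB hC hD hBA hBC hW hcd hcB hdB hpi he
    heA hside, hside⟩

lemma exists_constraint_mem_openTriangle (hS : ValidConstraints P S) (hgp : GenPos P)
    {A B C z : Pt} (hA : A ∈ P) (hB : B ∈ P) (hC : C ∈ P)
    (hD : crossp (B - A) (C - A) ≠ 0) (hAC : NoIncidentCrossing S B A C)
    (hz : InOpenTriangle A B C z) (hcross : ¬ NoIncidentCrossing S B A z) :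
    ∃ ω ∈ P, InOpenTriangle A B C ω ∧ IsConstraintOf S B ω ∧
      baryC A B C z / baryB A B C z < baryC A B C ω / baryB A B C ω := by
  obtain ⟨hAB, hAC', hBC⟩ := ne_of_crossp_ne_zero hD
  simp only [NoIncidentCrossing, not_forall, not_not] at hcross
  obtain ⟨ω, hBω, q, hqAz, hqBω⟩ := hcross
  obtain ⟨-, hωP, hBω'⟩ := hBω.mem hS
  have hqT := hz.of_mem_openSegment_left hqAz
  have hωA : ω ≠ A := by
    rintro rfl
    refine hqT.notMem_triangleBoundary hD (Or.inl (Or.inl ?_))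
    rw [segment_symm]
    exact openSegment_subset_segment ℝ _ _ hqBω
  have hωC : ω ≠ C := by
    rintro rfl
    exact hqT.notMem_triangleBoundary hD
      (Or.inl (Or.inr (openSegment_subset_segment ℝ _ _ hqBω)))
  have hside : areaRatio A B C z B * areaRatio A B C z ω < 0 :=
    mul_neg_of_mem_openSegment (areaRatio_affine z) hqBω
      (areaRatio_eq_zero_of_mem_openSegment hqAz)
      (div_ne_zero (by rw [crossp_swap]; exact neg_ne_zero.2 (hz.crossp_ne_zero hD)) hD)
  have hωT : InOpenTriangle A B C ω := by
    refine inOpenTriangle_of_avoids_boundary hD hqT (notMem_triangleBoundary_of_constraint hS hgp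
      hA hB hC hAB hBC hBω hqBω (Or.inr rfl) hωA hBω'.symm ?_ ?_ ?_)
    · exact fun h =>
        hωA (eq_of_properInter_common_endpoint hgp hB hA hωP hAB.symm hBω' h.swap_left).symm
    · exact fun h => hωC (eq_of_properInter_common_endpoint hgp hB hC hωP hBC hBω' h).symm
    · rintro p (rfl | hp)
      · exact notMem_segment_of_genPos hgp hA hC hωP hAC' hωA hωC
      · exact notMem_segment_of_mem_openSegment hS hgp hBω
          (openSegment_subset_openSegment_of_mem hqBω hp) hA hC (hAC ω hBω)
  exact ⟨ω, hωP, hωT, hBω, baryC_div_baryB_lt hD hz hωT hside⟩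

end Landing

section Descent

variable {P : Finset Pt} {S : Set (Pt × Pt)}

lemma exists_visible_mem_openTriangle (hS : ValidConstraints P S) (hgp : GenPos P)
    {A B C : Pt} (hA : A ∈ P) (hB : B ∈ P) (hC : C ∈ P) (hD : crossp (B - A) (C - A) ≠ 0)
    (hBA : Visible S B A) (hBC : Visible S B C) (hAC : ¬ Visible S A C)
    (hcross : ∀ z ∈ P, (z = C ∨ InOpenTriangle A B C z) → NoIncidentCrossing S B A z) :
    ∃ z ∈ P, InOpenTriangle A B C z ∧ Visible S A z := by
  classical
  obtain ⟨e, heP, heT, -⟩ := exists_mem_openTriangle_of_not_visible hS hgp hA hB hC hC hD hBA hBC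
    (Or.inl rfl) hAC (hcross C hC (Or.inl rfl))
  -- the interior vertex angularly closest to the side `AB`, as seen from `A`
  obtain ⟨W, hW, hmin⟩ := (P.filter (InOpenTriangle A B C)).exists_min_image
    (fun z => baryC A B C z / baryB A B C z) ⟨e, Finset.mem_filter.2 ⟨heP, heT⟩⟩
  obtain ⟨hWP, hWT⟩ := Finset.mem_filter.1 hW
  refine ⟨W, hWP, hWT, ?_⟩
  by_contra hAW
  obtain ⟨e', he'P, he'T, hlt⟩ := exists_mem_openTriangle_of_not_visible hS hgp hA hB hC hWP hD
    hBA hBC (Or.inr hWT) hAW (hcross W hWP (Or.inr hWT))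
  have hle := hmin e' (Finset.mem_filter.2 ⟨he'P, he'T⟩)
  obtain ⟨-, hWb, -⟩ := (inOpenTriangle_iff_bary_pos hD).1 hWT
  obtain ⟨-, heb, -⟩ := (inOpenTriangle_iff_bary_pos hD).1 he'T
  rw [div_le_div_iff₀ hWb heb] at hle
  rw [areaRatio_eq_bary hD] at hlt
  linarith

lemma exists_visible_noIncidentCrossing (hS : ValidConstraints P S) (hgp : GenPos P)
    {A B C : Pt} (hA : A ∈ P) (hB : B ∈ P) (hC : C ∈ P) (hD : crossp (B - A) (C - A) ≠ 0)
    (hAC : NoIncidentCrossing S B A C) (h : ∃ z ∈ P, InOpenTriangle A B C z ∧ Visible S B z) :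
    ∃ z ∈ P, InOpenTriangle A B C z ∧ Visible S B z ∧ NoIncidentCrossing S B A z := by
  classical
  obtain ⟨z₀, hz₀P, hz₀T, hz₀V⟩ := h
  -- the `B`-visible interior vertex angularly farthest from the side `AB`, as seen from `A`
  obtain ⟨z, hz, hmax⟩ :=
    (P.filter fun z => InOpenTriangle A B C z ∧ Visible S B z).exists_max_image
    (fun z => baryC A B C z / baryB A B C z) ⟨z₀, Finset.mem_filter.2 ⟨hz₀P, hz₀T, hz₀V⟩⟩
  obtain ⟨hzP, hzT, hzV⟩ := Finset.mem_filter.1 hz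
  refine ⟨z, hzP, hzT, hzV, ?_⟩
  by_contra hcross
  obtain ⟨ω, hωP, hωT, hBω, hlt⟩ :=
    exists_constraint_mem_openTriangle hS hgp hA hB hC hD hAC hzT hcross
  exact (hmax ω (Finset.mem_filter.2 ⟨hωP, hωT, Or.inl hBω⟩)).not_gt hlt

end Descent

lemma strictlyBetween_of_smul_eq {u v w x : Pt} {t α β : ℝ} (hX : crossp (v - u) (x - u) ≠ 0)
    (ht : 0 < t) (hα : 0 < α) (hβ : 0 < β) (h : t • (w - u) = α • (v - u) + β • (x - u)) :
    StrictlyBetween u v w x := by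
  have h₁ : t * crossp (v - u) (w - u) = β * crossp (v - u) (x - u) := by
    rw [← crossp_smul_right, h, crossp_add_right, crossp_smul_right, crossp_smul_right,
      crossp_self]
    ring
  have h₂ : t * crossp (w - u) (x - u) = α * crossp (v - u) (x - u) := by
    rw [← crossp_smul_left, h, crossp_add_left, crossp_smul_left, crossp_smul_left, crossp_self]
    ring
  rcases hX.lt_or_gt with hX | hX
  · right
    constructor <;> nlinarith
  · left
    constructor <;> nlinarith

lemma SameSubcone.noIncidentCrossing {S : Set (Pt × Pt)} {u v x w : Pt} {i : Fin 3}
    (hsub : SameSubcone S u i v x) (hD : crossp (v - u) (x - u) ≠ 0)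
    (hw : w = x ∨ InOpenTriangle u v x w) : NoIncidentCrossing S u v w := by
  rintro ω hω ⟨q, hqvw, hquω⟩
  obtain ⟨b, c, hb, hc, -, hwu⟩ := exists_sub_eq_of_eq_or_inOpenTriangle hw
  obtain ⟨s, hs0, hs1, rfl⟩ := mem_openSegment_iff_add_smul.1 hqvw
  obtain ⟨t, ht0, -, hq⟩ := mem_openSegment_iff_add_smul.1 hquω
  refine hsub.2.2 ω hω (strictlyBetween_of_smul_eq hD ht0 (α := 1 - s + s * b) (β := s * c)
    (by nlinarith) (by positivity) ?_)
  rw [show t • (ω - u) = v + s • (w - v) - u by rw [hq]; abel]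
  linear_combination (norm := module) s • hwu

section Cone

variable {i : Fin 3} {u v x w : Pt} {b c : ℝ}

lemma projB_eq_of_sub_eq (h : w - u = b • (v - u) + c • (x - u)) :
    projB i u w = b * projB i u v + c * projB i u x := by
  simp only [projB, dotp, h, PiLp.add_apply, PiLp.smul_apply, smul_eq_mul]
  ring

lemma projB_pos (h : inPosCone i u v) : 0 < projB i u v :=
  lt_of_lt_of_le (mul_pos (by positivity) (dist_pos.2 (Ne.symm h.1))) h.2

lemma inPosCone_of_sub_eq (hv : inPosCone i u v) (hx : inPosCone i u x) (hb : 0 ≤ b)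
    (hc : 0 < c) (h : w - u = b • (v - u) + c • (x - u)) : inPosCone i u w := by
  have hproj := projB_eq_of_sub_eq (i := i) h
  have hpos : 0 < projB i u w := by
    rw [hproj]
    nlinarith [projB_pos hv, projB_pos hx]
  refine ⟨fun hwu => ?_, ?_⟩
  · rw [hwu, projB, sub_self] at hpos
    simp [dotp] at hpos
  · have hdist : dist u w ≤ b * dist u v + c * dist u x := by
      rw [dist_comm u w, dist_comm u v, dist_comm u x, dist_eq_norm, dist_eq_norm, dist_eq_norm, h]
      calc ‖b • (v - u) + c • (x - u)‖ ≤ ‖b • (v - u)‖ + ‖c • (x - u)‖ := norm_add_le _ _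
        _ = b * ‖v - u‖ + c * ‖x - u‖ := by
          rw [norm_smul, norm_smul, Real.norm_of_nonneg hb, Real.norm_of_nonneg hc.le]
    calc √3 / 2 * dist u w ≤ √3 / 2 * (b * dist u v + c * dist u x) := by gcongr
      _ = b * (√3 / 2 * dist u v) + c * (√3 / 2 * dist u x) := by ring
      _ ≤ b * projB i u v + c * projB i u x := by gcongr; exacts [hv.2, hx.2]
      _ = projB i u w := hproj.symm

lemma projB_lt_of_sub_eq (hv : inPosCone i u v) (hlt : projB i u x < projB i u v) (hc : 0 < c)
    (hbc : b + c ≤ 1) (h : w - u = b • (v - u) + c • (x - u)) :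
    projB i u w < projB i u v := by
  rw [projB_eq_of_sub_eq h]
  nlinarith [projB_pos hv]

end Cone

def IsCandidate (S : Set (Pt × Pt)) (u v x w : Pt) : Prop :=
  (w = x ∨ InOpenTriangle u v x w) ∧ (Visible S u w ∨ Visible S v w) ∧ NoIncidentCrossing S v u w

lemma IsCandidate.exists_mem_openTriangle {P : Finset Pt} {S : Set (Pt × Pt)}
    (hS : ValidConstraints P S) (hgp : GenPos P) {u v x w : Pt} {i : Fin 3} (hu : u ∈ P)
    (hv : v ∈ P) (hw : w ∈ P) (hD : crossp (v - u) (x - u) ≠ 0) (hsub : SameSubcone S u i v x)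
    (hvis : Visible S u v) (hcand : IsCandidate S u v x w)
    (hnot : ¬ (Visible S u w ∧ Visible S v w)) :
    ∃ z ∈ P, InOpenTriangle u v w z ∧ IsCandidate S u v x z := by
  obtain ⟨hwx, hwvis, hcross⟩ := hcand
  have hin : ∀ z, InOpenTriangle u v w z → InOpenTriangle u v x z := fun z hz =>
    hwx.elim (fun h => h ▸ hz) fun h => h.trans hz
  obtain ⟨b, c, -, hc, -, hwu⟩ := exists_sub_eq_of_eq_or_inOpenTriangle hwx
  have hDw : crossp (v - u) (w - u) ≠ 0 := crossp_ne_zero_of_sub_eq hD hc.ne' hwu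
  have of_visible_from_v : (∃ z ∈ P, InOpenTriangle u v w z ∧ Visible S v z) →
      ∃ z ∈ P, InOpenTriangle u v w z ∧ IsCandidate S u v x z := fun h => by
    obtain ⟨z, hzP, hzT, hvz, hz⟩ := exists_visible_noIncidentCrossing hS hgp hu hv hw hDw hcross h
    exact ⟨z, hzP, hzT, Or.inr (hin z hzT), Or.inr hvz, hz⟩
  rcases hwvis with huw | hvw
  · have hDw' : crossp (u - v) (w - v) ≠ 0 := by
      rw [show crossp (u - v) (w - v) = - crossp (v - u) (w - u) by
        simp only [crossp, PiLp.sub_apply]; ring]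
      exact neg_ne_zero.2 hDw
    obtain ⟨z, hzP, hzT, hvz⟩ := exists_visible_mem_openTriangle hS hgp hv hu hw hDw' hvis huw
      (fun h => hnot ⟨huw, h⟩) fun z _ hz => hsub.noIncidentCrossing hD <| by
        rcases hz with rfl | hz
        exacts [hwx, Or.inr (hin z hz.swap)]
    exact of_visible_from_v ⟨z, hzP, hzT.swap, hvz⟩
  · by_cases hbad : ∃ z ∈ P, InOpenTriangle u v w z ∧ ¬ NoIncidentCrossing S v u z
    · obtain ⟨z, hzP, hzT, hz⟩ := hbad
      -- the far endpoint of that constraint is a vertex inside `u v w` visible from `v`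
      obtain ⟨ω, hωP, hωT, hvω, -⟩ :=
        exists_constraint_mem_openTriangle hS hgp hu hv hw hDw hcross hzT hz
      exact of_visible_from_v ⟨ω, hωP, hωT, Or.inl hvω⟩
    · push Not at hbad
      obtain ⟨z, hzP, hzT, huz⟩ := exists_visible_mem_openTriangle hS hgp hu hv hw hDw hvis.symm hvw
        (fun h => hnot ⟨h, hvw⟩) fun z hzP hz => hz.elim (fun h => h ▸ hcross) (hbad z hzP)
      exact ⟨z, hzP, hzT, Or.inr (hin z hzT), Or.inl huz, hbad z hzP hzT⟩

theorem closer_visible_vertex_in_subcone_general (P : Finset Pt) (S : Set (Pt × Pt))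
    (hS : ValidConstraints P S) (hgp : GenPos P)
    (u v x : Pt) (hu : u ∈ P) (hv : v ∈ P) (hx : x ∈ P) (i : Fin 3)
    (hvis : Visible S u v)
    (hsub : SameSubcone S u i v x) (hxvis : Visible S u x)
    (hcloser : projB i u x < projB i u v) :
    ∃ y ∈ P, y ≠ u ∧ y ≠ v ∧ Visible S u y ∧ Visible S v y ∧
      inPosCone i u y ∧ projB i u y < projB i u v := by
  classical
  have hxv : x ≠ v := by
    rintro rfl
    exact hcloser.false
  have hD : crossp (v - u) (x - u) ≠ 0 :=
    hgp.1 u hu v hv x hx hsub.1.1.symm hxv.symm hsub.2.1.1.symm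
  have hx_cand : x ∈ P.filter (IsCandidate S u v x) := Finset.mem_filter.2
    ⟨hx, Or.inl rfl, Or.inl hxvis, hxvis.noIncidentCrossing hS hsub.1.1 hxv.symm⟩
  obtain ⟨y, hy, hmin⟩ := (P.filter (IsCandidate S u v x)).exists_min_image
    (fun w => (P.filter (InOpenTriangle u v w)).card) ⟨x, hx_cand⟩
  obtain ⟨hyP, hy⟩ := Finset.mem_filter.1 hy
  obtain ⟨b, c, hb, hc, hbc, hyu⟩ := exists_sub_eq_of_eq_or_inOpenTriangle hy.1
  have hboth : Visible S u y ∧ Visible S v y := by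
    by_contra hnot
    obtain ⟨z, hzP, hzT, hz⟩ := hy.exists_mem_openTriangle hS hgp hu hv hyP hD hsub hvis hnot
    exact (hmin z (Finset.mem_filter.2 ⟨hzP, hz⟩)).not_gt
      (card_filter_inOpenTriangle_lt hzP (crossp_ne_zero_of_sub_eq hD hc.ne' hyu) hzT)
  have hproj := projB_lt_of_sub_eq hsub.1 hcloser hc hbc hyu
  have hcone := inPosCone_of_sub_eq hsub.1 hsub.2.1 hb hc hyu
  exact ⟨y, hyP, hcone.1, by rintro rfl; exact hproj.false, hboth.1, hboth.2, hcone, hproj⟩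

/-- If `u` and `v` are mutually visible vertices with `v` in a positive
subcone of `u`, and some vertex `x` in the same subcone is visible to `u` with
bisector projection closer to `u` than that of `v`, then there is a vertex `y`
visible to both `u` and `v`, lying in the cone `Cᵢᵘ`, whose bisector
projection is strictly closer to `u` than that of `v`. -/
theorem closer_visible_vertex_in_subcone (P : Finset Pt) (S : Set (Pt × Pt))
    (hS : ValidConstraints P S) (hgp : GenPos P)
    (u v x : Pt) (hu : u ∈ P) (hv : v ∈ P) (hx : x ∈ P) (i : Fin 3)
    (hvis : Visible S u v) (hcone : inPosCone i u v)
    (hsub : SameSubcone S u i v x) (hxvis : Visible S u x)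
    (hcloser : projB i u x < projB i u v) :
    ∃ y ∈ P, y ≠ u ∧ y ≠ v ∧ Visible S u y ∧ Visible S v y ∧
      inPosCone i u y ∧ projB i u y < projB i u v :=
  closer_visible_vertex_in_subcone_general P S hS hgp u v x hu hv hx i hvis hsub hxvis hcloser
end
end

section
/- In a plane geometric graph G whose internal faces are triangles, if u and v are vertices joined by an edge of G, and the edge uv does not belong to any triangle of G intersected by a segment st, then u and v lie on the boundary of the same face of the subgraph H of G formed by the triangles intersected by st. -/
open scoped Real
noncomputable section

/-- Closed triangle with vertices `a`, `b`, `c`. -/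
def Tri (a b c : Pt) : Set Pt := convexHull ℝ {a, b, c}

/-- `abc` is a (triangular internal) face of the plane graph with edge set `E`
on vertex set `P`: its three sides are edges and its interior meets no vertex
and no edge. -/
def IsTriFace (E : Set (Pt × Pt)) (P : Finset Pt) (a b c : Pt) : Prop :=
  (a, b) ∈ E ∧ (b, c) ∈ E ∧ (c, a) ∈ E ∧
  (∀ p ∈ P, p ∉ interior (Tri a b c)) ∧
  (∀ e ∈ E, openSegment ℝ e.1 e.2 ∩ interior (Tri a b c) = ∅)

/-- `E` is (the edge set of) a constrained triangulation of the point set `P`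
subject to the constraints `S`: a plane geometric graph containing all
constraints as edges, in which every internal face is a triangle. -/
structure IsCTri (P : Finset Pt) (S : Set (Pt × Pt)) (E : Set (Pt × Pt)) : Prop where
  symm : ∀ a b : Pt, (a, b) ∈ E → (b, a) ∈ E
  ends : ∀ e ∈ E, e.1 ∈ P ∧ e.2 ∈ P ∧ e.1 ≠ e.2
  constraints_sub : S ⊆ E
  plane : ∀ e ∈ E, ∀ f ∈ E, ProperInter e.1 e.2 f.1 f.2 → f = e ∨ f = (e.2, e.1)
  no_vertex_in_edge : ∀ e ∈ E, ∀ p ∈ P, p ∉ openSegment ℝ e.1 e.2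
  triangulated : ∀ x ∈ convexHull ℝ (P : Set Pt),
      (∀ e ∈ E, x ∉ segment ℝ e.1 e.2) →
      ∃ a b c : Pt, IsTriFace E P a b c ∧ x ∈ interior (Tri a b c)

/-- The (undirected) edge `e` is a side of the triangle `abc`. -/
def edgeOfTri (e : Pt × Pt) (a b c : Pt) : Prop :=
  e.1 ∈ ({a, b, c} : Set Pt) ∧ e.2 ∈ ({a, b, c} : Set Pt) ∧ e.1 ≠ e.2

/-- The subgraph `H` of the triangulation: all edges of triangles (faces)
whose closed region intersects the segment `st`. -/
def Hedges (E : Set (Pt × Pt)) (P : Finset Pt) (s t : Pt) : Set (Pt × Pt) :=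
  { e | e ∈ E ∧ ∃ a b c : Pt, IsTriFace E P a b c ∧ edgeOfTri e a b c ∧
        (Tri a b c ∩ segment ℝ s t).Nonempty }

/-- The drawing (union of the closed segments) of a geometric edge set. -/
def drawing (E : Set (Pt × Pt)) : Set Pt := ⋃ e ∈ E, segment ℝ e.1 e.2

/-- `u` and `v` lie on the boundary of a common face of the plane graph drawn
by `E`; faces are the connected components of the plane minus the drawing. -/
def OnSameFace (E : Set (Pt × Pt)) (u v : Pt) : Prop :=
  ∃ x, x ∉ drawing E ∧
    u ∈ closure (connectedComponentIn (drawing E)ᶜ x) ∧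
    v ∈ closure (connectedComponentIn (drawing E)ᶜ x)

/-- In a constrained (plane) triangulation, if `uv` is an edge that belongs to
no triangle intersected by the segment `st`, then `u` and `v` lie on the
boundary of the same face of the subgraph `H` of triangles intersected
by `st`. -/
theorem same_face_of_not_in_H (P : Finset Pt) (S E : Set (Pt × Pt))
    (h : IsCTri P S E) (s t u v : Pt) (he : (u, v) ∈ E)
    (hno : ∀ a b c : Pt, IsTriFace E P a b c → edgeOfTri (u, v) a b c →
      ¬ (Tri a b c ∩ segment ℝ s t).Nonempty) :
    OnSameFace (Hedges E P s t) u v := by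
  obtain ⟨hu, hv, hne⟩ := h.ends (u, v) he
  -- the open segment uv avoids the drawing of H
  have key : openSegment ℝ u v ⊆ (drawing (Hedges E P s t))ᶜ := by
    intro y hy hyd
    simp only [drawing, Set.mem_iUnion] at hyd
    obtain ⟨e, heH, hyseg⟩ := hyd
    obtain ⟨heE, a, b, c, hface, hedge, hmeet⟩ := heH
    rw [← insert_endpoints_openSegment] at hyseg
    rcases hyseg with h1 | h2 | hopen
    · subst h1; exact h.no_vertex_in_edge (u, v) he _ (h.ends e heE).1 hy
    · subst h2; exact h.no_vertex_in_edge (u, v) he _ (h.ends e heE).2.1 hy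
    · have hpi : ProperInter u v e.1 e.2 := ⟨y, hy, hopen⟩
      rcases h.plane (u, v) he e heE hpi with rfl | rfl
      · exact hno a b c hface hedge hmeet
      · exact hno a b c hface ⟨hedge.2.1, hedge.1, hedge.2.2.symm⟩ hmeet
  -- midpoint as witness
  set x := midpoint ℝ u v with hx
  have hxmem : x ∈ openSegment ℝ u v :=
    ⟨1/2, 1/2, by norm_num, by norm_num, by norm_num, by
      rw [hx, midpoint_eq_smul_add, smul_add]; norm_num⟩
  have hsub : openSegment ℝ u v ⊆ connectedComponentIn (drawing (Hedges E P s t))ᶜ x :=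
    (convex_openSegment u v).isPreconnected.subset_connectedComponentIn hxmem key
  have hcl : segment ℝ u v ⊆ closure (connectedComponentIn (drawing (Hedges E P s t))ᶜ x) := by
    rw [← closure_openSegment]
    exact closure_mono hsub
  exact ⟨x, key hxmem, hcl (left_mem_segment ℝ u v), hcl (right_mem_segment ℝ u v)⟩
end
end
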